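/- Let (X,ρ) be a separable metric space, μ a Borel probability measure on X, q ∈ ℝ, and ξ a premeasure on X. Then W^{q,ξ}_μ is a metric outer measure on X: it is monotone, vanishes on ∅, is countably subadditive, and satisfies W^{q,ξ}_μ(E ∪ F) = W^{q,ξ}_μ(E) + W^{q,ξ}_μ(F) whenever E, F ⊆ X satisfy ρ(E,F) := inf{ρ(x,y) : x∈E, y∈F} > 0. Consequently W^{q,ξ}_μ is a measure on the Borel σ-algebra of X. -/

import Mathlib

open Metric MeasureTheory Set Filter TopologicalSpace
open scoped ENNReal NNReal Classical

noncomputable section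

/-- `x ^ q` for extended nonnegative reals, with the paper's convention
`0 ^ q = ∞` for `q ≤ 0`. -/
def epow (x : ℝ≥0∞) (q : ℝ) : ℝ≥0∞ := if x = 0 ∧ q ≤ 0 then ∞ else x ^ q

variable {X X' : Type*}

section Defs

variable [MetricSpace X] [MetricSpace X']

/-- A premeasure on a metric space: an increasing `[0,∞]`-valued function on the family of
closed balls, vanishing on the empty set. -/
def IsPremeasure (ξ : Set X → ℝ≥0∞) : Prop :=
  ξ ∅ = 0 ∧ ∀ (x : X) (r : ℝ) (x' : X) (r' : ℝ),
    closedBall x r ⊆ closedBall x' r' → ξ (closedBall x r) ≤ ξ (closedBall x' r')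

/-- The doubling ("blanketed") condition defining the class `Φ_D` of premeasures:
`ξ(B(x,2r)) ≤ K ξ(B(x,r))` for some constant `K > 1`, all `x` and all `0 < r ≤ 1`. -/
def PremeasureBlanketed (ξ : Set X → ℝ≥0∞) : Prop :=
  ∃ K : ℝ≥0, 1 < K ∧ ∀ (x : X) (r : ℝ), 0 < r → r ≤ 1 →
    ξ (closedBall x (2 * r)) ≤ (K : ℝ≥0∞) * ξ (closedBall x r)

variable [MeasurableSpace X] [MeasurableSpace X']

/-- The support of a Borel measure on a metric space. -/
def measSupport (μ : Measure X) : Set X := {x : X | ∀ r : ℝ, 0 < r → 0 < μ (ball x r)}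

/-- A blanketed (doubling) measure: for some `a > 1`,
`limsup_{r → 0⁺} sup_{x ∈ supp μ} μ(B(x,ar)) / μ(B(x,r)) < ∞`. -/
def MeasureBlanketed (μ : Measure X) : Prop :=
  ∃ a : ℝ, 1 < a ∧
    limsup (fun r : ℝ => ⨆ x ∈ measSupport μ,
      μ (closedBall x (a * r)) / μ (closedBall x r)) (nhdsWithin 0 (Ioi 0)) < ∞

/-- The quantity `μ(B)^q ξ(B)` attached to a ball `B`. -/
def ballWeight (μ : Measure X) (q : ℝ) (ξ : Set X → ℝ≥0∞) (B : Set X) : ℝ≥0∞ :=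
  epow (μ B) q * ξ B

/-- A centered `δ`-cover of `E`: countably many closed balls centered in `E`, of diameters
at most `2δ`, covering `E`. -/
def IsCenteredCover (E : Set X) (δ : ℝ) (c : ℕ → X) (r : ℕ → ℝ) : Prop :=
  (∀ i, c i ∈ E) ∧ (∀ i, diam (closedBall (c i) (r i)) ≤ 2 * δ) ∧
    E ⊆ ⋃ i, closedBall (c i) (r i)

/-- The pre-Hausdorff quantity `H^{q,ξ}_{μ,δ}(E)`. -/
def Hd (μ : Measure X) (q : ℝ) (ξ : Set X → ℝ≥0∞) (δ : ℝ) (E : Set X) : ℝ≥0∞ :=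
  if E = ∅ then 0 else
    ⨅ (c : ℕ → X) (r : ℕ → ℝ) (_ : IsCenteredCover E δ c r),
      ∑' i, ballWeight μ q ξ (closedBall (c i) (r i))

/-- `H^{q,ξ}_{μ,0}(E) = sup_{δ > 0} H^{q,ξ}_{μ,δ}(E)`. -/
def H0 (μ : Measure X) (q : ℝ) (ξ : Set X → ℝ≥0∞) (E : Set X) : ℝ≥0∞ :=
  ⨆ (δ : ℝ) (_ : 0 < δ), Hd μ q ξ δ E

/-- The generalized Hausdorff measure `H^{q,ξ}_μ(E) = sup_{F ⊆ E} H^{q,ξ}_{μ,0}(F)`. -/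
def HM (μ : Measure X) (q : ℝ) (ξ : Set X → ℝ≥0∞) (E : Set X) : ℝ≥0∞ :=
  ⨆ (F : Set X) (_ : F ⊆ E), H0 μ q ξ F

/-- A weighted and centered `δ`-cover of `E`: countably many pairs `(w i, B i)` of nonnegative
weights and closed balls centered in `E` of diameters at most `2δ`, with
`Σ {w i : x ∈ B i} ≥ 1` for every `x ∈ E`. -/
def IsWeightedCover (E : Set X) (δ : ℝ) (w : ℕ → ℝ≥0) (c : ℕ → X) (r : ℕ → ℝ) : Prop :=
  (∀ i, c i ∈ E) ∧ (∀ i, diam (closedBall (c i) (r i)) ≤ 2 * δ) ∧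
    ∀ x ∈ E, 1 ≤ ∑' i, (if x ∈ closedBall (c i) (r i) then (w i : ℝ≥0∞) else 0)

/-- The pre-weighted-Hausdorff quantity `W^{q,ξ}_{μ,δ}(E)`. -/
def Wd (μ : Measure X) (q : ℝ) (ξ : Set X → ℝ≥0∞) (δ : ℝ) (E : Set X) : ℝ≥0∞ :=
  if E = ∅ then 0 else
    ⨅ (w : ℕ → ℝ≥0) (c : ℕ → X) (r : ℕ → ℝ) (_ : IsWeightedCover E δ w c r),
      ∑' i, (w i : ℝ≥0∞) * ballWeight μ q ξ (closedBall (c i) (r i))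

/-- `W^{q,ξ}_{μ,0}(E) = sup_{δ > 0} W^{q,ξ}_{μ,δ}(E)`. -/
def W0 (μ : Measure X) (q : ℝ) (ξ : Set X → ℝ≥0∞) (E : Set X) : ℝ≥0∞ :=
  ⨆ (δ : ℝ) (_ : 0 < δ), Wd μ q ξ δ E

/-- The weighted generalized Hausdorff measure `W^{q,ξ}_μ(E) = sup_{F ⊆ E} W^{q,ξ}_{μ,0}(F)`. -/
def WM (μ : Measure X) (q : ℝ) (ξ : Set X → ℝ≥0∞) (E : Set X) : ℝ≥0∞ :=
  ⨆ (F : Set X) (_ : F ⊆ E), W0 μ q ξ F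

/-- Hypothesis (H) for `(X, ξ, μ)`: for every `ε > 0`, `X` can be covered by countably many
closed balls of diameters `< ε` on which `μ(B)^q ξ(B)` is finite. -/
def HypH (μ : Measure X) (q : ℝ) (ξ : Set X → ℝ≥0∞) : Prop :=
  ∀ ε : ℝ, 0 < ε → ∃ (c : ℕ → X) (r : ℕ → ℝ),
    (univ : Set X) ⊆ (⋃ i, closedBall (c i) (r i)) ∧
    (∀ i, diam (closedBall (c i) (r i)) < ε) ∧
    ∀ i, ballWeight μ q ξ (closedBall (c i) (r i)) < ∞

/-- The product premeasure `ξ₀(B × B') = ξ(B) ξ'(B')` on the product space (whose closed balls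
are exactly the products `B(x,r) × B(x',r)`), with the convention `0 ⬝ ∞ = ∞ ⬝ 0 = 0`. -/
def prodPre (ξ : Set X → ℝ≥0∞) (ξ' : Set X' → ℝ≥0∞) : Set (X × X') → ℝ≥0∞ :=
  fun S => ξ (Prod.fst '' S) * ξ' (Prod.snd '' S)

/-- Two sets are (positively) separated: `inf {ρ(x,y) : x ∈ E, y ∈ F} > 0`. -/
def SepSets (E F : Set X) : Prop := 0 < ⨅ x ∈ E, ⨅ y ∈ F, edist x y

/-- The upper `(q,ξ)`-density of `ν` at `x` with respect to `μ`:
`limsup_{r → 0⁺} ν(B(x,r)) / (μ(B(x,r))^q ξ(B(x,r)))`. -/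
def upperDensity (μ : Measure X) (q : ℝ) (ξ : Set X → ℝ≥0∞) (x : X) (ν : Measure X) : ℝ≥0∞ :=
  limsup (fun r : ℝ => ν (closedBall x r) / ballWeight μ q ξ (closedBall x r))
    (nhdsWithin 0 (Ioi 0))

/-- A Hausdorff function: right continuous, monotone increasing `h : [0,∞] → [0,∞]` with
`h(0) = 0` and `h(r) > 0` for `r > 0`. -/
def IsHausdorffFunction (h : ℝ≥0∞ → ℝ≥0∞) : Prop :=
  Monotone h ∧ h 0 = 0 ∧ (∀ r : ℝ≥0∞, 0 < r → 0 < h r) ∧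
    ∀ r : ℝ≥0∞, ContinuousWithinAt h (Ici r) r

/-- The premeasure `ξ_h` induced by a Hausdorff function: `ξ_h(B) = h(diam B)` for `B ≠ ∅`,
`ξ_h(∅) = 0`. -/
def hausPre (h : ℝ≥0∞ → ℝ≥0∞) : Set X → ℝ≥0∞ :=
  fun B => if B = ∅ then 0 else h (EMetric.diam B)

end Defs

/-!
Because the balls of a cover must be centred in the set being covered, `W^{q,ξ}_{μ,δ}` is not
monotone; the supremum over subsets in `W^{q,ξ}_μ` repairs this, and it turns any countably
subadditive set function vanishing on `∅` into an outer measure. Countable subadditivity of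
`W^{q,ξ}_{μ,δ}` comes from concatenating almost optimal covers. If `2δ` is smaller than the
distance between `A` and `B`, a ball of a weighted `δ`-cover of `A ∪ B` centred in `A` misses `B`
and vice versa, so the cover splits into covers of `A` and of `B`: `W^{q,ξ}_{μ,0}` is additive on
separated sets. Hence `W^{q,ξ}_μ` is a metric outer measure, and Carathéodory's criterion makes
Borel sets measurable.
-/

namespace MeasureTheory.OuterMeasure

variable {α : Type*} {m : Set α → ℝ≥0∞}

def supOfSubsets (m : Set α → ℝ≥0∞) (m_empty : m ∅ = 0)
    (m_iUnion : ∀ s : ℕ → Set α, m (⋃ n, s n) ≤ ∑' n, m (s n)) : OuterMeasure α where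
  measureOf s := ⨆ t ⊆ s, m t
  empty := nonpos_iff_eq_zero.1 <| iSup₂_le fun t ht => by rw [subset_empty_iff.1 ht, m_empty]
  mono hs := iSup₂_le fun t ht => le_iSup₂_of_le t (ht.trans hs) le_rfl
  iUnion_nat s _ := iSup₂_le fun t ht =>
    calc m t = m (⋃ n, t ∩ s n) := by rw [← inter_iUnion, inter_eq_left.2 ht]
      _ ≤ ∑' n, m (t ∩ s n) := m_iUnion _
      _ ≤ ∑' n, ⨆ u ⊆ s n, m u :=
        ENNReal.tsum_le_tsum fun n => le_iSup₂_of_le (t ∩ s n) inter_subset_right le_rfl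

theorem supOfSubsets_apply (m_empty : m ∅ = 0)
    (m_iUnion : ∀ s : ℕ → Set α, m (⋃ n, s n) ≤ ∑' n, m (s n)) (s : Set α) :
    supOfSubsets m m_empty m_iUnion s = ⨆ t ⊆ s, m t :=
  rfl

theorem isMetric_supOfSubsets [EMetricSpace α] (m_empty : m ∅ = 0)
    (m_iUnion : ∀ s : ℕ → Set α, m (⋃ n, s n) ≤ ∑' n, m (s n))
    (m_sep : ∀ s t, AreSeparated s t → m s + m t ≤ m (s ∪ t)) :
    (supOfSubsets m m_empty m_iUnion).IsMetric := by
  intro s t hst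
  refine le_antisymm (measure_union_le s t) ?_
  simp only [supOfSubsets_apply]
  refine ENNReal.biSup_add_biSup_le' ⟨∅, empty_subset s⟩ ⟨∅, empty_subset t⟩ fun u hu v hv => ?_
  exact (m_sep u v (hst.mono hu hv)).trans
    (le_iSup₂_of_le (u ∪ v) (union_subset_union hu hv) le_rfl)

end MeasureTheory.OuterMeasure

theorem SepSets.areSeparated [MetricSpace X] {E F : Set X} (h : SepSets E F) :
    AreSeparated E F :=
  ⟨_, h.ne', fun x hx y hy => iInf₂_le_of_le x hx (iInf₂_le y hy)⟩

theorem IsWeightedCover.mono [MetricSpace X] {E : Set X} {δ δ' : ℝ} {w : ℕ → ℝ≥0} {c : ℕ → X}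
    {r : ℕ → ℝ} (h : IsWeightedCover E δ w c r) (hδ : δ ≤ δ') : IsWeightedCover E δ' w c r :=
  ⟨h.1, fun i => (h.2.1 i).trans (by linarith), h.2.2⟩

section WeightedHausdorff

variable [MetricSpace X] [MeasurableSpace X] {μ : Measure X} {q : ℝ} {ξ : Set X → ℝ≥0∞}
  {δ : ℝ} {E : Set X} {w : ℕ → ℝ≥0} {c : ℕ → X} {r : ℕ → ℝ}

theorem Wd_empty : Wd μ q ξ δ ∅ = 0 :=
  if_pos rfl

theorem Wd_eq_iInf (hE : E.Nonempty) :
    Wd μ q ξ δ E = ⨅ (w : ℕ → ℝ≥0) (c : ℕ → X) (r : ℕ → ℝ) (_ : IsWeightedCover E δ w c r),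
      ∑' i, (w i : ℝ≥0∞) * ballWeight μ q ξ (closedBall (c i) (r i)) :=
  if_neg hE.ne_empty

theorem Wd_le_tsum (h : IsWeightedCover E δ w c r) :
    Wd μ q ξ δ E ≤ ∑' i, (w i : ℝ≥0∞) * ballWeight μ q ξ (closedBall (c i) (r i)) := by
  rcases E.eq_empty_or_nonempty with rfl | hE
  · simp [Wd_empty]
  rw [Wd_eq_iInf hE]
  exact iInf_le_of_le w (iInf_le_of_le c (iInf_le_of_le r (iInf_le _ h)))

theorem Wd_antitone (E : Set X) : Antitone fun δ => Wd μ q ξ δ E := by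
  intro δ δ' hδ
  rcases E.eq_empty_or_nonempty with rfl | hE
  · simp [Wd_empty]
  show Wd μ q ξ δ' E ≤ Wd μ q ξ δ E
  rw [Wd_eq_iInf (δ := δ) hE]
  exact le_iInf fun w => le_iInf fun c => le_iInf fun r => le_iInf fun h => Wd_le_tsum (h.mono hδ)

theorem exists_tsum_lt_of_Wd_lt {U : Set X} (hEU : E ⊆ U) (hU : U.Nonempty) (hδ : 0 ≤ δ)
    {η : ℝ≥0∞} (hη : Wd μ q ξ δ E < η) :
    ∃ (w : ℕ → ℝ≥0) (c : ℕ → X) (r : ℕ → ℝ), (∀ i, c i ∈ U) ∧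
      (∀ i, diam (closedBall (c i) (r i)) ≤ 2 * δ) ∧
      (∀ x ∈ E, 1 ≤ ∑' i, if x ∈ closedBall (c i) (r i) then (w i : ℝ≥0∞) else 0) ∧
      ∑' i, (w i : ℝ≥0∞) * ballWeight μ q ξ (closedBall (c i) (r i)) < η := by
  rcases E.eq_empty_or_nonempty with rfl | hE
  · obtain ⟨x₀, hx₀⟩ := hU
    refine ⟨0, fun _ => x₀, 0, fun _ => hx₀, fun _ => ?_, by simp, by simpa [Wd_empty] using hη⟩
    simp [hδ]
  rw [Wd_eq_iInf hE] at hη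
  simp only [iInf_lt_iff] at hη
  obtain ⟨w, c, r, hcov, hsum⟩ := hη
  exact ⟨w, c, r, fun i => hEU (hcov.1 i), hcov.2.1, hcov.2.2, hsum⟩

theorem Wd_iUnion_le (hδ : 0 ≤ δ) (A : ℕ → Set X) :
    Wd μ q ξ δ (⋃ n, A n) ≤ ∑' n, Wd μ q ξ δ (A n) := by
  rcases (⋃ n, A n).eq_empty_or_nonempty with hU | hU
  · simp [hU, Wd_empty]
  refine ENNReal.le_of_forall_pos_le_add fun ε hε hfin => ?_
  obtain ⟨ε', hε'pos, hε'sum⟩ :=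
    ENNReal.exists_pos_sum_of_countable' (ENNReal.coe_ne_zero.2 hε.ne') ℕ
  have hlt (n : ℕ) : Wd μ q ξ δ (A n) < Wd μ q ξ δ (A n) + ε' n :=
    ENNReal.lt_add_right (ne_top_of_le_ne_top hfin.ne (ENNReal.le_tsum n)) (hε'pos n).ne'
  choose w c r hcU hdiam hcov hsum using fun n =>
    exists_tsum_lt_of_Wd_lt (subset_iUnion A n) hU hδ (hlt n)
  let e : ℕ ≃ ℕ × ℕ := Nat.pairEquiv.symm
  let weight (p : ℕ × ℕ) : ℝ≥0∞ :=
    w p.1 p.2 * ballWeight μ q ξ (closedBall (c p.1 p.2) (r p.1 p.2))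
  have hcover : IsWeightedCover (⋃ n, A n) δ (fun i => w (e i).1 (e i).2)
      (fun i => c (e i).1 (e i).2) (fun i => r (e i).1 (e i).2) := by
    refine ⟨fun i => hcU _ _, fun i => hdiam _ _, fun x hx => ?_⟩
    obtain ⟨n, hn⟩ := mem_iUnion.1 hx
    let mass (p : ℕ × ℕ) : ℝ≥0∞ :=
      if x ∈ closedBall (c p.1 p.2) (r p.1 p.2) then (w p.1 p.2 : ℝ≥0∞) else 0
    calc 1 ≤ ∑' j, mass (n, j) := hcov n x hn
      _ ≤ ∑' p, mass p := ENNReal.tsum_comp_le_tsum_of_injective (Prod.mk_right_injective n) mass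
      _ = ∑' i, mass (e i) := (e.tsum_eq mass).symm
  calc Wd μ q ξ δ (⋃ n, A n) ≤ ∑' i, weight (e i) := Wd_le_tsum hcover
    _ = ∑' n, ∑' j, weight (n, j) :=
        (e.tsum_eq weight).trans (ENNReal.tsum_prod (f := fun n j => weight (n, j)))
    _ ≤ ∑' n, (Wd μ q ξ δ (A n) + ε' n) := ENNReal.tsum_le_tsum fun n => (hsum n).le
    _ ≤ ∑' n, Wd μ q ξ δ (A n) + ε := by rw [ENNReal.tsum_add]; gcongr

theorem Wd_le_tsum_of_subset {A U : Set X} (hAU : A ⊆ U) (hδ : 0 ≤ δ)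
    (h : IsWeightedCover U δ w c r) (hmiss : ∀ i, c i ∉ A → ∀ x ∈ A, x ∉ closedBall (c i) (r i)) :
    Wd μ q ξ δ A ≤
      ∑' i, if c i ∈ A then (w i : ℝ≥0∞) * ballWeight μ q ξ (closedBall (c i) (r i)) else 0 := by
  rcases A.eq_empty_or_nonempty with rfl | ⟨a₀, ha₀⟩
  · simp [Wd_empty]
  -- the balls centred outside `A` are replaced by weightless singletons `{a₀}`
  let w' i := if c i ∈ A then w i else 0
  let c' i := if c i ∈ A then c i else a₀
  let r' i := if c i ∈ A then r i else 0
  have hcover : IsWeightedCover A δ w' c' r' := by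
    refine ⟨fun i => ?_, fun i => ?_, fun x hx => ?_⟩
    · by_cases hi : c i ∈ A <;> simp [c', hi, ha₀]
    · by_cases hi : c i ∈ A
      · simpa [c', r', hi] using h.2.1 i
      · simp [c', r', hi, hδ]
    · refine (h.2.2 x (hAU hx)).trans_eq (tsum_congr fun i => ?_)
      by_cases hi : c i ∈ A
      · simp [w', c', r', hi]
      · simp [w', hi, hmiss i hi x hx]
  refine (Wd_le_tsum hcover).trans_eq (tsum_congr fun i => ?_)
  by_cases hi : c i ∈ A <;> simp [w', c', r', hi]

theorem Wd_add_le_of_forall_lt_dist {A B : Set X} (hδ : 0 ≤ δ)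
    (hAB : ∀ x ∈ A, ∀ y ∈ B, 2 * δ < dist x y) :
    Wd μ q ξ δ A + Wd μ q ξ δ B ≤ Wd μ q ξ δ (A ∪ B) := by
  rcases (A ∪ B).eq_empty_or_nonempty with hempty | hne
  · simp [(union_empty_iff.1 hempty).1, (union_empty_iff.1 hempty).2, Wd_empty]
  rw [Wd_eq_iInf hne]
  refine le_iInf fun w => le_iInf fun c => le_iInf fun r => le_iInf fun h => ?_
  have hnear (i : ℕ) (x : X) (hx : x ∈ closedBall (c i) (r i)) : dist x (c i) ≤ 2 * δ :=
    (dist_le_diam_of_mem isBounded_closedBall hx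
      (mem_closedBall_self (dist_nonneg.trans (mem_closedBall'.1 hx)))).trans (h.2.1 i)
  have hmissA (i : ℕ) (hi : c i ∉ A) (x : X) (hx : x ∈ A) : x ∉ closedBall (c i) (r i) :=
    fun hxi => (hnear i x hxi).not_gt (hAB x hx _ ((h.1 i).resolve_left hi))
  have hmissB (i : ℕ) (hi : c i ∉ B) (y : X) (hy : y ∈ B) : y ∉ closedBall (c i) (r i) :=
    fun hyi => (hnear i y hyi).not_gt (dist_comm y (c i) ▸ hAB _ ((h.1 i).resolve_right hi) y hy)
  have hdisj (x : X) (hA : x ∈ A) (hB : x ∈ B) : False := by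
    linarith [hAB x hA x hB, dist_self x]
  refine (add_le_add (Wd_le_tsum_of_subset subset_union_left hδ h hmissA)
    (Wd_le_tsum_of_subset subset_union_right hδ h hmissB)).trans_eq ?_
  rw [← ENNReal.tsum_add]
  refine tsum_congr fun i => ?_
  rcases h.1 i with hA | hB
  · simp [hA, show c i ∉ B from hdisj _ hA]
  · simp [hB, show c i ∉ A from fun hA => hdisj _ hA hB]

theorem Wd_le_W0 (hδ : 0 < δ) (E : Set X) : Wd μ q ξ δ E ≤ W0 μ q ξ E :=
  le_iSup₂ (f := fun δ (_ : 0 < δ) => Wd μ q ξ δ E) δ hδ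

theorem W0_empty : W0 μ q ξ (∅ : Set X) = 0 := by
  simp [W0, Wd_empty]

theorem W0_iUnion_le (A : ℕ → Set X) : W0 μ q ξ (⋃ n, A n) ≤ ∑' n, W0 μ q ξ (A n) :=
  iSup₂_le fun _ hδ =>
    (Wd_iUnion_le hδ.le A).trans (ENNReal.tsum_le_tsum fun n => Wd_le_W0 hδ (A n))

theorem W0_add_le_of_areSeparated {A B : Set X} (h : AreSeparated A B) :
    W0 μ q ξ A + W0 μ q ξ B ≤ W0 μ q ξ (A ∪ B) := by
  obtain ⟨ρ, hρ0, hρ⟩ := h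
  obtain ⟨t, -, ht0, htρ⟩ := ENNReal.lt_iff_exists_real_btwn.1 (pos_iff_ne_zero.2 hρ0)
  have ht : 0 < t := ENNReal.ofReal_pos.1 ht0
  have hsep (δ : ℝ) (hδ : 2 * δ ≤ t) : ∀ x ∈ A, ∀ y ∈ B, 2 * δ < dist x y := by
    intro x hx y hy
    have : ENNReal.ofReal t < ENNReal.ofReal (dist x y) :=
      edist_dist x y ▸ htρ.trans_le (hρ x hx y hy)
    exact hδ.trans_lt ((ENNReal.ofReal_lt_ofReal_iff_of_nonneg ht.le).1 this)
  refine ENNReal.biSup_add_biSup_le' ⟨1, one_pos⟩ ⟨1, one_pos⟩ fun δ₁ h₁ δ₂ h₂ => ?_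
  set δ := min (min δ₁ δ₂) (t / 2)
  have hδ : 0 < δ := lt_min (lt_min h₁ h₂) (half_pos ht)
  calc Wd μ q ξ δ₁ A + Wd μ q ξ δ₂ B ≤ Wd μ q ξ δ A + Wd μ q ξ δ B :=
        add_le_add (Wd_antitone A ((min_le_left _ _).trans (min_le_left _ _)))
          (Wd_antitone B ((min_le_left _ _).trans (min_le_right _ _)))
    _ ≤ Wd μ q ξ δ (A ∪ B) :=
        Wd_add_le_of_forall_lt_dist hδ.le (hsep δ (by linarith [min_le_right (min δ₁ δ₂) (t / 2)]))
    _ ≤ W0 μ q ξ (A ∪ B) := Wd_le_W0 hδ _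

def weightedHausdorff (μ : Measure X) (q : ℝ) (ξ : Set X → ℝ≥0∞) : OuterMeasure X :=
  OuterMeasure.supOfSubsets (W0 μ q ξ) W0_empty W0_iUnion_le

theorem coe_weightedHausdorff : ⇑(weightedHausdorff μ q ξ) = WM μ q ξ :=
  rfl

theorem isMetric_weightedHausdorff : (weightedHausdorff μ q ξ).IsMetric :=
  OuterMeasure.isMetric_supOfSubsets _ _ fun _ _ => W0_add_le_of_areSeparated

end WeightedHausdorff

section Thms

variable [MetricSpace X] [SeparableSpace X] [MeasurableSpace X] [BorelSpace X]
variable [MetricSpace X'] [SeparableSpace X'] [MeasurableSpace X'] [BorelSpace X']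

theorem stmt5_general (μ : Measure X)
    (q : ℝ) (ξ : Set X → ℝ≥0∞) :
    WM μ q ξ ∅ = 0 ∧
    (∀ E F : Set X, E ⊆ F → WM μ q ξ E ≤ WM μ q ξ F) ∧
    (∀ E : ℕ → Set X, WM μ q ξ (⋃ n, E n) ≤ ∑' n, WM μ q ξ (E n)) ∧
    (∀ E F : Set X, SepSets E F → WM μ q ξ (E ∪ F) = WM μ q ξ E + WM μ q ξ F) ∧
    (∀ B : Set X, MeasurableSet B → ∀ A : Set X,
      WM μ q ξ A = WM μ q ξ (A ∩ B) + WM μ q ξ (A \ B)) := by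
  rw [← coe_weightedHausdorff]
  set W := weightedHausdorff μ q ξ
  refine ⟨measure_empty, fun _ _ => measure_mono, measure_iUnion_le,
    fun E F h => isMetric_weightedHausdorff E F h.areSeparated, fun B hB => ?_⟩
  have hB' : MeasurableSet[W.caratheodory] B :=
    isMetric_weightedHausdorff.borel_le_caratheodory B (BorelSpace.measurable_eq (α := X) ▸ hB)
  exact W.isCaratheodory_iff.1 hB'

theorem stmt5 (μ : Measure X) [IsProbabilityMeasure μ]
    (q : ℝ) (ξ : Set X → ℝ≥0∞) (hξ : IsPremeasure ξ) :
    WM μ q ξ ∅ = 0 ∧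
    (∀ E F : Set X, E ⊆ F → WM μ q ξ E ≤ WM μ q ξ F) ∧
    (∀ E : ℕ → Set X, WM μ q ξ (⋃ n, E n) ≤ ∑' n, WM μ q ξ (E n)) ∧
    (∀ E F : Set X, SepSets E F → WM μ q ξ (E ∪ F) = WM μ q ξ E + WM μ q ξ F) ∧
    (∀ B : Set X, MeasurableSet B → ∀ A : Set X,
      WM μ q ξ A = WM μ q ξ (A ∩ B) + WM μ q ξ (A \ B)) :=
  stmt5_general μ q ξ

end Thms
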